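/- For every positive integer β and real μ > 0, ∑_{n=0}^∞ (1 − e^{−μ}) e^{−μn} (n+β)^{2β} ≤ (2β/(1 − e^{−μ}))^{2β}. -/

import Mathlib

open Finset

private lemma asc_prod (n : ℕ) : ∀ k : ℕ, n.ascFactorial k = ∏ i ∈ range k, (n + i)
  | 0 => rfl
  | k + 1 => by rw [Nat.ascFactorial_succ, prod_range_succ, mul_comm, asc_prod n k]

private lemma fact_prod : ∀ k : ℕ, Nat.factorial k = ∏ i ∈ range k, (i + 1)
  | 0 => rfl
  | k + 1 => by rw [Nat.factorial_succ, prod_range_succ, mul_comm, fact_prod k]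

private lemma key_nat (β n : ℕ) : (n + β) ^ (2 * β) * Nat.factorial (2 * β) ≤
    (2 * β) ^ (2 * β) * (n + 1).ascFactorial (2 * β) := by
  rw [asc_prod, fact_prod,
    show (n + β) ^ (2 * β) = ∏ _i ∈ range (2 * β), (n + β) by
      rw [Finset.prod_const, Finset.card_range],
    show (2 * β) ^ (2 * β) = ∏ _i ∈ range (2 * β), (2 * β) by
      rw [Finset.prod_const, Finset.card_range],
    ← Finset.prod_mul_distrib, ← Finset.prod_mul_distrib]
  apply Finset.prod_le_prod'
  intro i hi
  rw [Finset.mem_range] at hi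
  have h1 : i + 1 ≤ 2 * β := hi
  calc (n + β) * (i + 1) = n * (i + 1) + β * i + β := by ring
    _ ≤ n * (2 * β) + (2 * β) * i + (2 * β) * 1 := by gcongr <;> omega
    _ = 2 * β * (n + 1 + i) := by ring

private lemma key_nat' (β n : ℕ) : (n + β) ^ (2 * β) ≤
    (2 * β) ^ (2 * β) * (n + 2 * β).choose (2 * β) := by
  have h := key_nat β n
  rw [Nat.ascFactorial_eq_factorial_mul_choose] at h
  have h2 : (0:ℕ) < Nat.factorial (2 * β) := Nat.factorial_pos _
  calc (n + β) ^ (2 * β) = (n + β) ^ (2 * β) * Nat.factorial (2 * β) / Nat.factorial (2 * β) := by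
        rw [Nat.mul_div_cancel _ h2]
    _ ≤ (2 * β) ^ (2 * β) * (Nat.factorial (2 * β) * (n + 2 * β).choose (2 * β)) / Nat.factorial (2 * β) := by
        exact Nat.div_le_div_right h
    _ = (2 * β) ^ (2 * β) * (n + 2 * β).choose (2 * β) := by
        rw [show (2 * β) ^ (2 * β) * (Nat.factorial (2 * β) * (n + 2 * β).choose (2 * β)) =
          (2 * β) ^ (2 * β) * (n + 2 * β).choose (2 * β) * Nat.factorial (2 * β) by ring,
          Nat.mul_div_cancel _ h2]

/-- For a positive integer β and μ > 0,
∑_{n=0}^∞ (1 − e^{−μ}) e^{−μn} (n+β)^{2β} ≤ (2β/(1 − e^{−μ}))^{2β}. -/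
theorem stmt_8 (β : ℕ) (hβ : 1 ≤ β) (μ : ℝ) (hμ : 0 < μ) :
    ∑' n : ℕ, (1 - Real.exp (-μ)) * Real.exp (-μ * n) * ((n : ℝ) + β) ^ (2 * β)
      ≤ (2 * (β : ℝ) / (1 - Real.exp (-μ))) ^ (2 * β) := by
  set q : ℝ := Real.exp (-μ) with hq
  have hq0 : 0 < q := Real.exp_pos _
  have hq1 : q < 1 := Real.exp_lt_one_iff.mpr (by linarith)
  have h1q : 0 < 1 - q := by linarith
  have hnorm : ‖q‖ < 1 := by rw [Real.norm_eq_abs, abs_of_pos hq0]; exact hq1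
  have hqn : ∀ n : ℕ, Real.exp (-μ * n) = q ^ n := by
    intro n
    rw [hq, ← Real.exp_nat_mul]
    ring_nf
  -- the comparison series
  set k := 2 * β with hk
  have hgsum : Summable (fun n : ℕ ↦ ((n + k).choose k : ℝ) * q ^ n) :=
    summable_choose_mul_geometric_of_norm_lt_one k hnorm
  have hgtsum : ∑' n : ℕ, ((n + k).choose k : ℝ) * q ^ n = 1 / (1 - q) ^ (k + 1) :=
    tsum_choose_mul_geometric_of_norm_lt_one k hnorm
  -- termwise bound
  have hterm : ∀ n : ℕ, (1 - q) * Real.exp (-μ * n) * ((n : ℝ) + β) ^ k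
      ≤ (1 - q) * (k : ℝ) ^ k * (((n + k).choose k : ℝ) * q ^ n) := by
    intro n
    rw [hqn n]
    have hle : ((n : ℝ) + β) ^ k ≤ (k : ℝ) ^ k * ((n + k).choose k : ℝ) := by
      have := key_nat' β n
      have hcast : (((n + β) ^ (2 * β) : ℕ) : ℝ) ≤
          (((2 * β) ^ (2 * β) * (n + 2 * β).choose (2 * β) : ℕ) : ℝ) := by
        exact_mod_cast this
      push_cast at hcast
      convert hcast using 2 <;> push_cast [hk] <;> ring
    calc (1 - q) * q ^ n * ((n : ℝ) + β) ^ k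
        ≤ (1 - q) * q ^ n * ((k : ℝ) ^ k * ((n + k).choose k : ℝ)) := by
          apply mul_le_mul_of_nonneg_left hle
          positivity
      _ = (1 - q) * (k : ℝ) ^ k * (((n + k).choose k : ℝ) * q ^ n) := by ring
  -- summability of the LHS
  have hfsum : Summable (fun n : ℕ ↦ (1 - q) * Real.exp (-μ * n) * ((n : ℝ) + β) ^ k) := by
    apply Summable.of_nonneg_of_le (fun n ↦ by positivity) hterm
    exact (hgsum.mul_left _)
  calc ∑' n : ℕ, (1 - q) * Real.exp (-μ * n) * ((n : ℝ) + β) ^ k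
      ≤ ∑' n : ℕ, (1 - q) * (k : ℝ) ^ k * (((n + k).choose k : ℝ) * q ^ n) :=
        Summable.tsum_le_tsum hterm hfsum (hgsum.mul_left _)
    _ = (1 - q) * (k : ℝ) ^ k * (1 / (1 - q) ^ (k + 1)) := by
        rw [tsum_mul_left, hgtsum]
    _ = ((k : ℝ) / (1 - q)) ^ k := by
        rw [div_pow, pow_succ]
        field_simp
    _ = (2 * (β : ℝ) / (1 - q)) ^ k := by
        congr 2
        push_cast [hk]; ring
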